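/- Let n ≥ 3 be odd and let V_n be the vertex set of the regular n-gon inscribed in the unit circle centered at the origin. Then the number of 3-element subsets of V_n whose convex hull contains the origin in its interior equals n(n−1)(n+1)/24. -/

import Mathlib

/-!
Index a 3-subset of the polygon as `{v a, v b, v c}` with `a < b < c < n`, where
`v k = (cos (2πk/n), sin (2πk/n))`. The origin is interior to a triangle `pqr` iff the
determinants `det (q, r)`, `det (r, p)`, `det (p, q)` share a strict sign, since divided by their
sum they are the barycentric coordinates of the origin. For polygon vertices they are the sines of
the arcs `2π(b-a)/n`, `2π(c-b)/n`, `2π(n+a-c)/n`, so the condition is that every arc is shorter than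
a half circle. For `n = 2m + 1` the map `(a, b, c) ↦ (2m + a - c, a, b + m - c)` matches these
triples with the triples `(e, x, y)` with `x, y ≤ e < m`, of which there are
`∑_{e<m} (e+1)² = m(m+1)(2m+1)/6 = n(n-1)(n+1)/24`.
-/

/-- The vertex set of the regular `n`-gon inscribed in the unit circle centered at the
origin: the points `(cos(2πk/n), sin(2πk/n))` for `k = 0, 1, ..., n-1`. -/
noncomputable def regularNgon (n : ℕ) : Finset (ℝ × ℝ) :=
  (Finset.range n).image
    (fun k : ℕ => (Real.cos (2 * Real.pi * k / n), Real.sin (2 * Real.pi * k / n)))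

open Real Finset Module

def cross (u v : ℝ × ℝ) : ℝ := u.1 * v.2 - u.2 * v.1

lemma cross_sub_sub (p q r : ℝ × ℝ) :
    cross (q - p) (r - p) = cross q r + cross r p + cross p q := by
  simp only [cross, Prod.fst_sub, Prod.snd_sub]
  ring

lemma det_finTwoProd (u v : ℝ × ℝ) : (Basis.finTwoProd ℝ).det ![u, v] = cross u v := by
  simp [Basis.det_apply, Matrix.det_fin_two, Basis.toMatrix_apply, cross]
  ring

lemma span_pair_eq_top_iff_cross_ne_zero (u v : ℝ × ℝ) :
    Submodule.span ℝ {u, v} = ⊤ ↔ cross u v ≠ 0 := by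
  rw [← Matrix.range_cons_cons_empty u v ![], ← det_finTwoProd, ← isUnit_iff_ne_zero,
    ← Basis.is_basis_iff_det]
  exact ⟨fun h => ⟨linearIndependent_of_top_le_span_of_card_eq_finrank h.ge (by simp), h⟩,
    And.right⟩

lemma vectorSpan_triangle_eq_top_iff (p q r : ℝ × ℝ) :
    vectorSpan ℝ {p, q, r} = ⊤ ↔ cross (q - p) (r - p) ≠ 0 := by
  rw [vectorSpan_eq_span_vsub_set_right ℝ (Set.mem_insert p _),
    ← span_pair_eq_top_iff_cross_ne_zero]
  simp [Set.image_insert_eq, Submodule.span_insert_zero]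

lemma exists_affineBasis_eq_triangle {p q r : ℝ × ℝ} (h : cross (q - p) (r - p) ≠ 0) :
    ∃ b : AffineBasis (Fin 3) ℝ (ℝ × ℝ), ⇑b = ![p, q, r] := by
  have hrange : Set.range ![p, q, r] = {p, q, r} := by
    rw [Matrix.range_cons, Matrix.range_cons_cons_empty, Set.singleton_union]
  have hspan : vectorSpan ℝ (Set.range ![p, q, r]) = ⊤ := by
    rwa [hrange, vectorSpan_triangle_eq_top_iff]
  have hind : AffineIndependent ℝ ![p, q, r] := by
    rw [affineIndependent_iff_le_finrank_vectorSpan ℝ _ (n := 2) rfl, hspan, finrank_top]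
    simp
  exact ⟨⟨_, hind, (AffineSubspace.affineSpan_eq_top_iff_vectorSpan_eq_top_of_nonempty ℝ _ _
    (Set.range_nonempty _)).2 hspan⟩, rfl⟩

lemma pos_div_sum_iff (a b c : ℝ) :
    (0 < a / (a + b + c) ∧ 0 < b / (a + b + c) ∧ 0 < c / (a + b + c)) ↔
      (0 < a ∧ 0 < b ∧ 0 < c) ∨ (a < 0 ∧ b < 0 ∧ c < 0) := by
  simp only [div_pos_iff]
  constructor
  · rintro ⟨ha | ha, hb | hb, hc | hc⟩ <;>
      first
      | exact Or.inl ⟨ha.1, hb.1, hc.1⟩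
      | exact Or.inr ⟨ha.1, hb.1, hc.1⟩
      | (exfalso; linarith [ha.2, hb.2, hc.2])
  · rintro (⟨ha, hb, hc⟩ | ⟨ha, hb, hc⟩)
    · have hs : 0 < a + b + c := by linarith
      exact ⟨.inl ⟨ha, hs⟩, .inl ⟨hb, hs⟩, .inl ⟨hc, hs⟩⟩
    · have hs : a + b + c < 0 := by linarith
      exact ⟨.inr ⟨ha, hs⟩, .inr ⟨hb, hs⟩, .inr ⟨hc, hs⟩⟩

theorem zero_mem_interior_convexHull_triangle_iff (p q r : ℝ × ℝ) :
    (0 : ℝ × ℝ) ∈ interior (convexHull ℝ {p, q, r}) ↔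
      (0 < cross q r ∧ 0 < cross r p ∧ 0 < cross p q) ∨
        (cross q r < 0 ∧ cross r p < 0 ∧ cross p q < 0) := by
  rw [← pos_div_sum_iff, ← cross_sub_sub]
  by_cases hD : cross (q - p) (r - p) = 0
  · simp only [hD, div_zero, lt_irrefl, false_and, iff_false]
    intro h0
    have hspan : affineSpan ℝ {p, q, r} = ⊤ := by
      rw [← affineSpan_convexHull]
      exact (convex_convexHull ℝ _).interior_nonempty_iff_affineSpan_eq_top.mp ⟨0, h0⟩
    rw [AffineSubspace.affineSpan_eq_top_iff_vectorSpan_eq_top_of_nonempty ℝ _ _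
      (Set.insert_nonempty _ _), vectorSpan_triangle_eq_top_iff] at hspan
    exact hspan hD
  obtain ⟨b, hb⟩ := exists_affineBasis_eq_triangle hD
  set D := cross (q - p) (r - p)
  set w : Fin 3 → ℝ := ![cross q r / D, cross r p / D, cross p q / D] with hw_def
  have hw : ∑ i, w i = 1 := by
    simp only [hw_def, Fin.sum_univ_three, Matrix.cons_val_zero, Matrix.cons_val_one,
      Matrix.cons_val_two, Matrix.tail_cons, Matrix.head_cons]
    rw [← add_div, ← add_div, ← cross_sub_sub]
    exact div_self hD
  have hcomb : univ.affineCombination ℝ b w = 0 := by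
    rw [hb, Finset.affineCombination_eq_linear_combination _ _ _ hw]
    simp only [hw_def, Fin.sum_univ_three, Matrix.cons_val_zero, Matrix.cons_val_one,
      Matrix.cons_val_two, Matrix.tail_cons, Matrix.head_cons]
    ext <;> simp only [Prod.fst_add, Prod.snd_add, Prod.smul_fst, Prod.smul_snd, smul_eq_mul,
      Prod.fst_zero, Prod.snd_zero, D, cross] <;> field_simp <;> ring
  have hrange : Set.range b = {p, q, r} := by
    rw [hb, Matrix.range_cons, Matrix.range_cons_cons_empty, Set.singleton_union]
  rw [← hrange, b.interior_convexHull, Set.mem_ofPred_eq, ← hcomb]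
  simp only [b.coord_apply_combination_of_mem (mem_univ _) hw, Fin.forall_fin_succ,
    IsEmpty.forall_iff, and_true]
  rfl

noncomputable def ngonVertex (n k : ℕ) : ℝ × ℝ := (cos (2 * π * k / n), sin (2 * π * k / n))

lemma regularNgon_eq_image (n : ℕ) : regularNgon n = (range n).image (ngonVertex n) := rfl

lemma cross_ngonVertex (n j k : ℕ) :
    cross (ngonVertex n j) (ngonVertex n k) = sin (2 * π * ((k : ℝ) - j) / n) := by
  rw [mul_sub, sub_div, sin_sub, cross, ngonVertex, ngonVertex]
  ring

lemma ngonVertex_injOn (n : ℕ) : Set.InjOn (ngonVertex n) (range n) := by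
  intro j hj k hk h
  simp only [coe_range, Set.mem_Iio] at hj hk
  simp only [ngonVertex, Prod.mk.injEq] at h
  have hn : (0 : ℝ) < n := by exact_mod_cast (Nat.zero_le j).trans_lt hj
  have hcos : cos (2 * π * ((j : ℝ) - k) / n) = 1 := by
    rw [mul_sub, sub_div, cos_sub, h.1, h.2, ← sq, ← sq, cos_sq_add_sin_sq]
  have hjn : (j : ℝ) < n := by exact_mod_cast hj
  have hkn : (k : ℝ) < n := by exact_mod_cast hk
  rw [cos_eq_one_iff_of_lt_of_lt, div_eq_zero_iff, mul_eq_zero] at hcos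
  · rcases hcos with (h0 | h0) | h0
    · exact absurd h0 (by positivity)
    · exact_mod_cast sub_eq_zero.1 h0
    · exact absurd h0 hn.ne'
  · rw [lt_div_iff₀ hn]; nlinarith [pi_pos, (Nat.cast_nonneg j : (0 : ℝ) ≤ j)]
  · rw [div_lt_iff₀ hn]; nlinarith [pi_pos, (Nat.cast_nonneg k : (0 : ℝ) ≤ k)]

lemma sin_pos_iff_of_pos_of_lt_two_pi {θ : ℝ} (h0 : 0 < θ) (h2π : θ < 2 * π) :
    0 < sin θ ↔ θ < π := by
  refine ⟨fun hsin => ?_, sin_pos_of_pos_of_lt_pi h0⟩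
  by_contra! hπ
  have := sin_nonpos_of_nonpos_of_neg_pi_le (x := θ - 2 * π) (by linarith) (by linarith)
  rw [sin_sub_two_pi] at this
  linarith

theorem sin_arcs_same_sign_iff {α β γ : ℝ} (hα : 0 < α) (hβ : 0 < β) (hγ : 0 < γ)
    (hsum : α + β + γ = 2 * π) :
    (0 < sin α ∧ 0 < sin β ∧ 0 < sin γ) ∨ (sin α < 0 ∧ sin β < 0 ∧ sin γ < 0) ↔
      α < π ∧ β < π ∧ γ < π := by
  have hπ := pi_pos
  rw [sin_pos_iff_of_pos_of_lt_two_pi hα (by linarith),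
    sin_pos_iff_of_pos_of_lt_two_pi hβ (by linarith),
    sin_pos_iff_of_pos_of_lt_two_pi hγ (by linarith)]
  refine ⟨fun h => h.resolve_right ?_, Or.inl⟩
  rintro ⟨hsα, hsβ, -⟩
  have hα' : π < α := by
    by_contra! h; exact (sin_nonneg_of_nonneg_of_le_pi hα.le h).not_gt hsα
  have hβ' : π < β := by
    by_contra! h; exact (sin_nonneg_of_nonneg_of_le_pi hβ.le h).not_gt hsβ
  linarith

lemma two_pi_mul_sub_div_lt_pi_iff {n x y : ℕ} (hn : 0 < n) :
    2 * π * ((x : ℝ) - y) / n < π ↔ 2 * x < 2 * y + n := by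
  rw [div_lt_iff₀ (by positivity), ← Nat.cast_lt (α := ℝ)]
  push_cast
  constructor <;> intro h <;> nlinarith [pi_pos]

theorem zero_mem_interior_convexHull_ngonVertex_iff {n a b c : ℕ} (hab : a < b) (hbc : b < c)
    (hcn : c < n) :
    (0 : ℝ × ℝ) ∈ interior (convexHull ℝ {ngonVertex n a, ngonVertex n b, ngonVertex n c}) ↔
      2 * b < 2 * a + n ∧ 2 * c < 2 * b + n ∧ 2 * a + n < 2 * c := by
  have hn : 0 < n := by omega
  have arc_pos : ∀ {x y : ℕ}, y < x → 0 < 2 * π * ((x : ℝ) - y) / n := fun hyx =>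
    div_pos (mul_pos (by positivity) (sub_pos.2 (by exact_mod_cast hyx))) (by positivity)
  have hwrap : sin (2 * π * ((a : ℝ) - c) / n) = sin (2 * π * (((n + a : ℕ) : ℝ) - c) / n) := by
    rw [← sin_add_two_pi]
    congr 1
    field_simp
    push_cast
    ring
  rw [zero_mem_interior_convexHull_triangle_iff, cross_ngonVertex, cross_ngonVertex,
    cross_ngonVertex, hwrap, sin_arcs_same_sign_iff (arc_pos hbc) (arc_pos (by omega))
      (arc_pos hab), two_pi_mul_sub_div_lt_pi_iff hn, two_pi_mul_sub_div_lt_pi_iff hn,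
    two_pi_mul_sub_div_lt_pi_iff hn]
  · omega
  · field_simp
    push_cast
    ring

theorem Finset.exists_lt_lt_eq_of_card_eq_three {α : Type*} [LinearOrder α] {s : Finset α}
    (h : s.card = 3) : ∃ a b c, a < b ∧ b < c ∧ s = {a, b, c} := by
  set e := s.orderEmbOfFin h
  refine ⟨e 0, e 1, e 2, e.strictMono (by decide), e.strictMono (by decide), ?_⟩
  apply coe_injective
  rw [← range_orderEmbOfFin s h]
  ext x
  simp only [Set.mem_range, Fin.exists_fin_succ, IsEmpty.exists_iff, or_false, coe_insert,
    coe_singleton, Set.mem_insert_iff, Set.mem_singleton_iff, eq_comm (a := x)]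
  rfl

theorem Finset.eq_of_insert_eq_of_lt_of_lt {α : Type*} [LinearOrder α] {a b c a' b' c' : α}
    (hab : a < b) (hbc : b < c) (hab' : a' < b') (hbc' : b' < c')
    (h : ({a, b, c} : Finset α) = {a', b', c'}) : a = a' ∧ b = b' ∧ c = c' := by
  have h3 : ({a, b, c} : Finset α).card = 3 :=
    card_eq_three.2 ⟨a, b, c, hab.ne, (hab.trans hbc).ne, hbc.ne, rfl⟩
  have hsorted : ∀ {x y z : α}, x < y → y < z → ({x, y, z} : Finset α) = {a, b, c} →
      ![x, y, z] = ⇑(orderEmbOfFin _ h3) := fun hxy hyz hs =>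
    orderEmbOfFin_unique h3 (by simp [Fin.forall_fin_succ, ← hs])
      (by simp [Fin.strictMono_iff_lt_succ, Fin.forall_fin_succ, hxy, hyz])
  have := (hsorted hab hbc rfl).trans (hsorted hab' hbc' h.symm).symm
  simpa [funext_iff, Fin.forall_fin_succ] using this

theorem ncard_subsets_image_eq {α β : Type*} [DecidableEq β] {v : α → β} {s : Finset α}
    (hv : Set.InjOn v s) (k : ℕ) (P : Finset β → Prop) :
    {T : Finset β | T ⊆ s.image v ∧ T.card = k ∧ P T}.ncard =
      {K : Finset α | K ⊆ s ∧ K.card = k ∧ P (K.image v)}.ncard := by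
  have hinj : Set.InjOn (·.image v) {K : Finset α | K ⊆ s ∧ K.card = k ∧ P (K.image v)} :=
    (image_injOn_powerset_of_injOn hv).mono fun K hK => mem_powerset.2 hK.1
  rw [← hinj.ncard_image]
  congr 1
  ext T
  constructor
  · rintro ⟨hsub, hcard, hP⟩
    obtain ⟨K, hK, rfl⟩ := subset_image_iff.1 hsub
    exact ⟨K, ⟨hK, by rwa [card_image_of_injOn (hv.mono (coe_subset.2 hK))] at hcard, hP⟩, rfl⟩
  · rintro ⟨K, ⟨hK, hcard, hP⟩, rfl⟩
    exact ⟨image_subset_image hK, by rwa [card_image_of_injOn (hv.mono (coe_subset.2 hK))], hP⟩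

theorem ncard_subsets_card_three_eq {α : Type*} [LinearOrder α] (s : Finset α)
    (P : Finset α → Prop) [DecidablePred P] :
    {K : Finset α | K ⊆ s ∧ K.card = 3 ∧ P K}.ncard =
      #{t ∈ s ×ˢ s ×ˢ s | t.1 < t.2.1 ∧ t.2.1 < t.2.2 ∧ P {t.1, t.2.1, t.2.2}} := by
  set f : α × α × α → Finset α := fun t => {t.1, t.2.1, t.2.2}
  have hinj : Set.InjOn f {t | t ∈ s ×ˢ s ×ˢ s ∧ t.1 < t.2.1 ∧ t.2.1 < t.2.2 ∧ P (f t)} := by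
    rintro ⟨a, b, c⟩ ⟨-, hab, hbc, -⟩ ⟨a', b', c'⟩ ⟨-, hab', hbc', -⟩ h
    obtain ⟨rfl, rfl, rfl⟩ := eq_of_insert_eq_of_lt_of_lt hab hbc hab' hbc' h
    rfl
  rw [← Set.ncard_coe_finset, coe_filter, ← hinj.ncard_image]
  congr 1
  ext K
  simp only [Set.mem_image, Set.mem_ofPred_eq, mem_product]
  constructor
  · rintro ⟨hsub, hcard, hP⟩
    obtain ⟨a, b, c, hab, hbc, rfl⟩ := exists_lt_lt_eq_of_card_eq_three hcard
    exact ⟨(a, b, c), ⟨⟨hsub (by simp), hsub (by simp), hsub (by simp)⟩, hab, hbc, hP⟩, rfl⟩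
  · rintro ⟨⟨a, b, c⟩, ⟨⟨ha, hb, hc⟩, hab, hbc, hP⟩, rfl⟩
    refine ⟨?_, card_eq_three.2 ⟨a, b, c, hab.ne, (hab.trans hbc).ne, hbc.ne, rfl⟩, hP⟩
    exact insert_subset_iff.2 ⟨ha, insert_subset_iff.2 ⟨hb, singleton_subset_iff.2 hc⟩⟩

/-- Index triples `a < b < c < n` whose arcs `b - a`, `c - b`, `n + a - c` are all shorter than
`n / 2`. -/
def shortArcTriples (n : ℕ) : Finset (ℕ × ℕ × ℕ) :=
  {t ∈ range n ×ˢ range n ×ˢ range n | t.1 < t.2.1 ∧ t.2.1 < t.2.2 ∧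
    2 * t.2.1 < 2 * t.1 + n ∧ 2 * t.2.2 < 2 * t.2.1 + n ∧ 2 * t.1 + n < 2 * t.2.2}

theorem card_shortArcTriples_eq_sum {n m : ℕ} (hn : n = 2 * m + 1) :
    #(shortArcTriples n) = ∑ e ∈ range m, (e + 1) * (e + 1) := by
  subst hn
  have hsigma : ∑ e ∈ range m, (e + 1) * (e + 1) =
      #((range m).sigma fun e => range (e + 1) ×ˢ range (e + 1)) := by
    simp [card_sigma]
  rw [hsigma]
  apply card_nbij' (fun t => ⟨2 * m + t.1 - t.2.2, t.1, t.2.1 + m - t.2.2⟩)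
    (fun t => (t.2.1, t.2.1 + t.2.2 + m - t.1, t.2.1 + 2 * m - t.1))
  · rintro ⟨a, b, c⟩ h
    simp only [shortArcTriples, coe_filter, mem_product, mem_range, Set.mem_ofPred_eq,
      coe_sigma, Set.mem_sigma_iff, mem_coe] at h ⊢
    omega
  · rintro ⟨e, x, y⟩ h
    simp only [shortArcTriples, coe_filter, mem_product, mem_range, Set.mem_ofPred_eq,
      coe_sigma, Set.mem_sigma_iff, mem_coe] at h ⊢
    omega
  · rintro ⟨a, b, c⟩ h
    simp only [shortArcTriples, coe_filter, mem_product, mem_range, Set.mem_ofPred_eq] at h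
    ext <;> simp only <;> omega
  · rintro ⟨e, x, y⟩ h
    simp only [coe_sigma, Set.mem_sigma_iff, mem_coe, mem_product, mem_range] at h
    simp only [Sigma.mk.injEq, heq_eq_eq, Prod.mk.injEq, true_and]
    omega

theorem six_mul_sum_range_succ_mul_self (m : ℕ) :
    6 * ∑ e ∈ range m, (e + 1) * (e + 1) = m * (m + 1) * (2 * m + 1) := by
  induction m with
  | zero => simp
  | succ k ih => rw [sum_range_succ, mul_add, ih]; ring

theorem card_shortArcTriples {n m : ℕ} (hn : n = 2 * m + 1) :
    #(shortArcTriples n) = n * (n - 1) * (n + 1) / 24 := by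
  have h24 : n * (n - 1) * (n + 1) = 24 * ∑ e ∈ range m, (e + 1) * (e + 1) := by
    rw [hn, Nat.add_sub_cancel]
    nlinarith [six_mul_sum_range_succ_mul_self m]
  rw [h24, Nat.mul_div_cancel_left _ (by norm_num), card_shortArcTriples_eq_sum hn]

theorem count_triangles_containing_origin_general (n : ℕ) (hodd : Odd n) :
    Set.ncard {T : Finset (ℝ × ℝ) | T ⊆ regularNgon n ∧ T.card = 3 ∧
        ((0, 0) : ℝ × ℝ) ∈ interior (convexHull ℝ (T : Set (ℝ × ℝ)))} =
      n * (n - 1) * (n + 1) / 24 := by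
  classical
  obtain ⟨m, hm⟩ := hodd
  rw [Prod.mk_zero_zero, regularNgon_eq_image, ncard_subsets_image_eq (ngonVertex_injOn n),
    ncard_subsets_card_three_eq, ← card_shortArcTriples hm, shortArcTriples]
  congr 1
  refine filter_congr fun t ht => ?_
  simp only [mem_product, mem_range] at ht
  simp only [coe_image, coe_insert, coe_singleton, Set.image_insert_eq, Set.image_singleton]
  exact and_congr_right fun hab => and_congr_right fun hbc =>
    zero_mem_interior_convexHull_ngonVertex_iff hab hbc ht.2.2

theorem count_triangles_containing_origin (n : ℕ) (hn : 3 ≤ n) (hodd : Odd n) :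
    Set.ncard {T : Finset (ℝ × ℝ) | T ⊆ regularNgon n ∧ T.card = 3 ∧
        ((0, 0) : ℝ × ℝ) ∈ interior (convexHull ℝ (T : Set (ℝ × ℝ)))} =
      n * (n - 1) * (n + 1) / 24 :=
  count_triangles_containing_origin_general n hodd
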